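/- Suppose that for every even L the linear functional ⟨·⟩ is reflection positive for reflections through edges and the two-point function G_L is torus symmetric, that there are constants C₁ > 0 and M ∈ (0,∞) such that liminf over even L → ∞ of (1/|T_L|) Σ_{x∈T_L} G_L(o,x) ≥ C₁, and G_L(x,y) ≤ M for all even L and all x, y ∈ T_L. Then for any φ ∈ (0, C₁/2) there exist ε > 0 and L₀ such that for every even L ≥ L₀, every i ∈ {1,…,d}, and every odd integer n with 0 < |n| < εL, one has G_L(o, n·e_i) ≥ φ. -/

import Mathlib

/-!
Reflection positivity for the reflection `θ` in the hyperplane `{z · e_i = 1/2}` gives, for `x, y`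
in the positive half, `G(x, θy) ≤ (G(x, θx) + G(y, θy)) / 2` and `G(x, θx) ≥ 0`. With torus
symmetry this makes the odd profile `T j = G(0, (2j+1) e_i)`, `j < L/2`, nonnegative, midpoint
convex and symmetric about its centre, hence decreasing towards the centre, and it bounds
`G(0, u) ≤ G(0, n e_i)` for odd `n` whenever `u · e_i` is at distance at least `n` from `0`.
The remaining slab of width `2n` contributes at most `2nM/L` to the Cesàro mean, so
`G(0, n e_i) ≥ C₁ - δ - 2nM/L`, which exceeds `φ` once `n < εL`.
-/

namespace RPPaper

/-- The torus `T_L = (ℤ/Lℤ)^d`. -/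
abbrev Torus (d L : ℕ) : Type := Fin d → ZMod L

/-- The unit vector `e i`. -/
def unitVec {d L : ℕ} (i : Fin d) : Torus d L := fun k => if k = i then 1 else 0

/-- The point `a • e i` on the torus. -/
def axis {d L : ℕ} (i : Fin d) (a : ZMod L) : Torus d L := fun k => if k = i then a else 0

/-- The integer representative of `a : ZMod L` in the interval `(-L/2, L/2]`. -/
def coordRep (L : ℕ) [NeZero L] (a : ZMod L) : ℤ :=
  if (a.val : ℤ) ≤ (L : ℤ) / 2 then (a.val : ℤ) else (a.val : ℤ) - (L : ℤ)

/-- The reflection of the torus in the hyperplane `{z : z·e i = t/2}` (here `t = 2m`);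
it is a reflection through edges if `t` is odd, and through vertices if `t` is even. -/
def reflect {d L : ℕ} (i : Fin d) (t : ℕ) (x : Torus d L) : Torus d L :=
  Function.update x i ((t : ZMod L) - x i)

/-- The positive half `T_L^+` of the torus associated to the reflection in the hyperplane
`{z : z·e i = t/2}`. -/
def posHalf (d L : ℕ) [NeZero L] (i : Fin d) (t : ℕ) : Finset (Torus d L) :=
  if t % 2 = 1 then Finset.univ.filter (fun x => (x i - (((t + 1) / 2 : ℕ) : ZMod L)).val < L / 2)
  else Finset.univ.filter (fun x => (x i - ((t / 2 : ℕ) : ZMod L)).val ≤ L / 2)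

/-- The negative half `T_L^- = θ(T_L^+)`. -/
def negHalf (d L : ℕ) [NeZero L] (i : Fin d) (t : ℕ) : Finset (Torus d L) :=
  (posHalf d L i t).image (reflect i t)

/-- The state space `S = ∏_{x ∈ T_L} Σ_x` (all local state spaces equal to `Sig`). -/
abbrev MState (d L : ℕ) (Sig : Type*) : Type _ := Torus d L → Sig

/-- `A : S → ℝ` has domain `D` if it depends only on the local states in `D`. -/
def HasDomain {d L : ℕ} {Sig : Type*} (A : MState d L Sig → ℝ) (D : Set (Torus d L)) : Prop :=
  ∀ w₁ w₂ : MState d L Sig, (∀ x ∈ D, w₁ x = w₂ x) → A w₁ = A w₂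

/-- The action `θA (w) = A (θ w)`, where `(θ w) x = w (θ x)`, of the reflection on functions. -/
def reflectFun {d L : ℕ} {Sig : Type*} (i : Fin d) (t : ℕ) (A : MState d L Sig → ℝ) :
    MState d L Sig → ℝ := fun w => A (fun x => w (reflect i t x))

/-- `⟨·⟩` is reflection positive with respect to the reflection in the hyperplane
`{z : z·e i = t/2}`: for all `A, B ∈ A_L^+` (members of the algebra with domain `T_L^+`),
`⟨A·θB⟩ = ⟨B·θA⟩` and `⟨A·θA⟩ ≥ 0`. -/
def IsRP {d L : ℕ} {Sig : Type*} [NeZero L] (AL : Subalgebra ℝ (MState d L Sig → ℝ))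
    (phi : (MState d L Sig → ℝ) →ₗ[ℝ] ℝ) (i : Fin d) (t : ℕ) : Prop :=
  ∀ A B : MState d L Sig → ℝ, A ∈ AL → B ∈ AL →
    HasDomain A ↑(posHalf d L i t) → HasDomain B ↑(posHalf d L i t) →
    phi (A * reflectFun i t B) = phi (B * reflectFun i t A) ∧ 0 ≤ phi (A * reflectFun i t A)

/-- Reflection positivity for all reflections through edges. -/
def RPEdges {d L : ℕ} {Sig : Type*} [NeZero L] (AL : Subalgebra ℝ (MState d L Sig → ℝ))
    (phi : (MState d L Sig → ℝ) →ₗ[ℝ] ℝ) : Prop :=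
  ∀ (i : Fin d) (t : ℕ), t < 2 * L → t % 2 = 1 → IsRP AL phi i t

/-- Reflection positivity for all reflections through vertices. -/
def RPVertices {d L : ℕ} {Sig : Type*} [NeZero L] (AL : Subalgebra ℝ (MState d L Sig → ℝ))
    (phi : (MState d L Sig → ℝ) →ₗ[ℝ] ℝ) : Prop :=
  ∀ (i : Fin d) (t : ℕ), t < 2 * L → t % 2 = 0 → IsRP AL phi i t

/-- The single-site function `F^j_x`, obtained from a function `f : Sig → ℝ` of the local
state at the origin by the (path-independent) sequence of reflections sending `o` to `x`. -/
def site {d L : ℕ} {Sig : Type*} (f : Sig → ℝ) (x : Torus d L) : MState d L Sig → ℝ :=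
  fun w => f (w x)

/-- The two-point function `G_L(x,y) = ⟨F²_x F²_y ∏_{z ≠ x,y} F¹_z⟩`. -/
noncomputable def twoPoint {d L : ℕ} {Sig : Type*} [NeZero L]
    (phi : (MState d L Sig → ℝ) →ₗ[ℝ] ℝ) (f1 f2 : Sig → ℝ) (x y : Torus d L) : ℝ :=
  phi (fun w => f2 (w x) * f2 (w y) * ∏ z ∈ (Finset.univ.erase x).erase y, f1 (w z))

/-- Torus symmetry: `⟨∏_{x∈A}F¹_x ∏_{x∈B}F²_x⟩ = ⟨∏_{x∈A+z}F¹_x ∏_{x∈B+z}F²_x⟩`. -/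
def TorusSymmetric {d L : ℕ} {Sig : Type*} [NeZero L]
    (phi : (MState d L Sig → ℝ) →ₗ[ℝ] ℝ) (f1 f2 : Sig → ℝ) : Prop :=
  ∀ (A B : Finset (Torus d L)) (z : Torus d L),
    phi (fun w => (∏ x ∈ A, f1 (w x)) * ∏ x ∈ B, f2 (w x)) =
      phi (fun w => (∏ x ∈ A, f1 (w (x + z))) * ∏ x ∈ B, f2 (w (x + z)))

theorem _root_.ZMod.val_neg_one_sub {L : ℕ} [NeZero L] (a : ZMod L) :
    (-1 - a).val = L - 1 - a.val := by
  have hL : ((L - 1 : ℕ) : ZMod L) = -1 := by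
    rw [Nat.cast_sub NeZero.one_le, ZMod.natCast_self, zero_sub, Nat.cast_one]
  have hval : ((L - 1 : ℕ) : ZMod L).val = L - 1 :=
    ZMod.val_natCast_of_lt (Nat.sub_lt (NeZero.pos L) one_pos)
  rw [← hL, ZMod.val_sub (by rw [hval]; exact Nat.le_sub_one_of_lt (ZMod.val_lt a)), hval]

section Reflection

variable {d L : ℕ} (i : Fin d) (t : ℕ)

theorem reflect_involutive : Function.Involutive (reflect (L := L) i t) := by
  intro x
  ext k
  by_cases h : k = i
  · subst h; simp [reflect]
  · simp [reflect, Function.update_of_ne h]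

variable {i t}

theorem reflect_apply_self (x : Torus d L) : reflect i t x i = t - x i := by
  simp [reflect]

theorem reflect_apply_of_ne (x : Torus d L) {k : Fin d} (hk : k ≠ i) : reflect i t x k = x k := by
  simp [reflect, Function.update_of_ne hk]

theorem natCast_eq_two_mul_succ_div_two_sub_one (ht : t % 2 = 1) :
    (t : ZMod L) = 2 * (((t + 1) / 2 : ℕ) : ZMod L) - 1 := by
  have h : t + 1 = 2 * ((t + 1) / 2) := by omega
  have h' := congrArg (Nat.cast : ℕ → ZMod L) h
  push_cast at h'
  linear_combination h'

variable [NeZero L]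

theorem mem_posHalf_iff (ht : t % 2 = 1) {x : Torus d L} :
    x ∈ posHalf d L i t ↔ (x i - (((t + 1) / 2 : ℕ) : ZMod L)).val < L / 2 := by
  simp [posHalf, ht]

/-- With `a = x i - (t + 1) / 2`, the reflection replaces `a` by `-1 - a`. -/
theorem reflect_mem_posHalf_iff (hL : Even L) (ht : t % 2 = 1) {x : Torus d L} :
    reflect i t x ∈ posHalf d L i t ↔ x ∉ posHalf d L i t := by
  have hshift : reflect i t x i - (((t + 1) / 2 : ℕ) : ZMod L) =
      -1 - (x i - (((t + 1) / 2 : ℕ) : ZMod L)) := by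
    rw [reflect_apply_self, natCast_eq_two_mul_succ_div_two_sub_one ht]; ring
  rw [mem_posHalf_iff ht, mem_posHalf_iff ht, hshift, ZMod.val_neg_one_sub]
  have := ZMod.val_lt (x i - (((t + 1) / 2 : ℕ) : ZMod L))
  have := Nat.even_iff.1 hL
  omega

theorem ne_reflect_of_mem_posHalf (hL : Even L) (ht : t % 2 = 1) {x y : Torus d L}
    (hx : x ∈ posHalf d L i t) (hy : y ∈ posHalf d L i t) : x ≠ reflect i t y := by
  rintro rfl
  exact (reflect_mem_posHalf_iff hL ht).1 hx hy

end Reflection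

section TwoPoint

variable {d L : ℕ} [NeZero L] {Sig : Type*} (phi : (MState d L Sig → ℝ) →ₗ[ℝ] ℝ)
  (f1 f2 : Sig → ℝ)

theorem twoPoint_comm (x y : Torus d L) : twoPoint phi f1 f2 x y = twoPoint phi f1 f2 y x := by
  unfold twoPoint
  congr 1
  ext w
  rw [Finset.erase_right_comm, mul_comm (f2 (w x))]

variable {phi f1 f2}

theorem twoPoint_eq_map_prod_mul_prod {x y : Torus d L} (hxy : x ≠ y) :
    twoPoint phi f1 f2 x y = phi (fun w => (∏ u ∈ (Finset.univ.erase x).erase y, f1 (w u)) *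
      ∏ u ∈ ({x, y} : Finset (Torus d L)), f2 (w u)) := by
  simp only [twoPoint, Finset.prod_pair hxy, mul_comm]

theorem TorusSymmetric.twoPoint_add (hsym : TorusSymmetric phi f1 f2) {x y : Torus d L}
    (hxy : x ≠ y) (z : Torus d L) :
    twoPoint phi f1 f2 (x + z) (y + z) = twoPoint phi f1 f2 x y := by
  have hxy' : x + z ≠ y + z := by simpa using hxy
  rw [twoPoint_eq_map_prod_mul_prod hxy, twoPoint_eq_map_prod_mul_prod hxy',
    hsym ((Finset.univ.erase x).erase y) {x, y} z]
  congr 1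
  ext w
  congr 1
  · exact (Finset.prod_nbij' (· + z) (· - z) (by simp) (by simp [sub_eq_iff_eq_add]) (by simp)
      (by simp) (by simp)).symm
  · rw [Finset.prod_pair hxy, Finset.prod_pair hxy']

theorem TorusSymmetric.twoPoint_eq_twoPoint_zero_sub (hsym : TorusSymmetric phi f1 f2)
    {x y : Torus d L} (hxy : x ≠ y) : twoPoint phi f1 f2 x y = twoPoint phi f1 f2 0 (y - x) := by
  rw [← hsym.twoPoint_add hxy (-x), add_neg_cancel, sub_eq_add_neg]

theorem TorusSymmetric.twoPoint_zero_neg (hsym : TorusSymmetric phi f1 f2) (x : Torus d L) :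
    twoPoint phi f1 f2 0 (-x) = twoPoint phi f1 f2 0 x := by
  rcases eq_or_ne x 0 with rfl | hx
  · rw [neg_zero]
  · rw [← hsym.twoPoint_add (neg_ne_zero.2 hx).symm x, zero_add, neg_add_cancel,
      twoPoint_comm]

end TwoPoint

theorem HasDomain.sub {d L : ℕ} {Sig : Type*} {A B : MState d L Sig → ℝ} {D : Set (Torus d L)}
    (hA : HasDomain A D) (hB : HasDomain B D) : HasDomain (A - B) D := fun w₁ w₂ hw => by
  simp only [Pi.sub_apply, hA w₁ w₂ hw, hB w₁ w₂ hw]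

section ReflectionPositivity

variable {d L : ℕ} [NeZero L] {Sig : Type*} {AL : Subalgebra ℝ (MState d L Sig → ℝ)}
  {phi : (MState d L Sig → ℝ) →ₗ[ℝ] ℝ} {i : Fin d} {t : ℕ}

/-- Positivity of `⟨(A - B) θ(A - B)⟩` together with `⟨A θB⟩ = ⟨B θA⟩`. -/
theorem IsRP.map_mul_reflectFun_le (hrp : IsRP AL phi i t) {A B : MState d L Sig → ℝ}
    (hA : A ∈ AL) (hB : B ∈ AL) (hAD : HasDomain A ↑(posHalf d L i t))
    (hBD : HasDomain B ↑(posHalf d L i t)) :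
    phi (A * reflectFun i t B) ≤
      (phi (A * reflectFun i t A) + phi (B * reflectFun i t B)) / 2 := by
  have hsymm := (hrp A B hA hB hAD hBD).1
  have hpos := (hrp (A - B) (A - B) (AL.sub_mem hA hB) (AL.sub_mem hA hB)
    (hAD.sub hBD) (hAD.sub hBD)).2
  have hexpand : (A - B) * reflectFun i t (A - B) = A * reflectFun i t A - A * reflectFun i t B -
      B * reflectFun i t A + B * reflectFun i t B := by
    change (A - B) * (reflectFun i t A - reflectFun i t B) = _
    ring
  rw [hexpand, map_add, map_sub, map_sub] at hpos
  linarith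

variable (i t) in
def halfObservable (f1 f2 : Sig → ℝ) (x : Torus d L) : MState d L Sig → ℝ :=
  fun w => f2 (w x) * ∏ z ∈ (posHalf d L i t).erase x, f1 (w z)

variable {f1 f2 : Sig → ℝ}

theorem halfObservable_mem (hF1 : ∀ x, site f1 x ∈ AL) (hF2 : ∀ x, site f2 x ∈ AL)
    (x : Torus d L) : halfObservable i t f1 f2 x ∈ AL := by
  have h : halfObservable i t f1 f2 x = site f2 x * ∏ z ∈ (posHalf d L i t).erase x, site f1 z := by
    ext w
    simp [halfObservable, site, Finset.prod_apply]
  rw [h]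
  exact AL.mul_mem (hF2 x) (AL.prod_mem fun z _ => hF1 z)

theorem halfObservable_hasDomain {x : Torus d L} (hx : x ∈ posHalf d L i t) :
    HasDomain (halfObservable i t f1 f2 x) ↑(posHalf d L i t) := fun w₁ w₂ hw => by
  simp only [halfObservable]
  rw [hw x hx, Finset.prod_congr rfl fun z hz => congrArg f1 (hw z (Finset.mem_of_mem_erase hz))]

/-- Since `θ` exchanges `T⁺` and its complement, `(T⁺ ∖ {x}) ∪ θ(T⁺ ∖ {y})` is all of the
torus except `x` and `θ y`. -/
theorem map_halfObservable_mul_reflectFun (hL : Even L) (ht : t % 2 = 1) {x y : Torus d L}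
    (hx : x ∈ posHalf d L i t) (hy : y ∈ posHalf d L i t) :
    phi (halfObservable i t f1 f2 x * reflectFun i t (halfObservable i t f1 f2 y)) =
      twoPoint phi f1 f2 x (reflect i t y) := by
  have hmem {z : Torus d L} : reflect i t z ∈ posHalf d L i t ↔ z ∉ posHalf d L i t :=
    reflect_mem_posHalf_iff hL ht
  set S := (Finset.univ.erase x).erase (reflect i t y)
  have hfilter : S.filter (· ∈ posHalf d L i t) = (posHalf d L i t).erase x := by
    ext z
    simp only [S, Finset.mem_filter, Finset.mem_erase, Finset.mem_univ, and_true]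
    constructor
    · exact fun ⟨⟨_, hzx⟩, hz⟩ => ⟨hzx, hz⟩
    · exact fun ⟨hzx, hz⟩ => ⟨⟨fun h => hmem.1 (h ▸ hz) hy, hzx⟩, hz⟩
  unfold twoPoint
  congr 1
  ext w
  have hreflect : ∏ z ∈ (posHalf d L i t).erase y, f1 (w (reflect i t z)) =
      ∏ z ∈ S.filter (· ∉ posHalf d L i t), f1 (w z) := by
    refine Finset.prod_nbij' (reflect i t) (reflect i t) ?_ ?_
      (fun z _ => reflect_involutive i t z) (fun z _ => reflect_involutive i t z) (fun _ _ => rfl)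
    · intro z hz
      simp only [S, Finset.mem_filter, Finset.mem_erase, Finset.mem_univ, and_true] at hz ⊢
      refine ⟨⟨fun h => hz.1 ((reflect_involutive i t).injective h), ?_⟩, fun h => hmem.1 h hz.2⟩
      rintro rfl
      exact hmem.1 hx hz.2
    · intro z hz
      simp only [S, Finset.mem_filter, Finset.mem_erase, Finset.mem_univ, and_true] at hz ⊢
      refine ⟨fun h => hz.1.1 (by rw [← h, reflect_involutive]), hmem.2 hz.2⟩
  simp only [Pi.mul_apply, halfObservable, reflectFun]
  rw [← Finset.prod_filter_mul_prod_filter_not S (· ∈ posHalf d L i t), hfilter, hreflect]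
  ring

variable (hL : Even L) (ht : t % 2 = 1) (hrp : IsRP AL phi i t) (hF1 : ∀ x, site f1 x ∈ AL)
  (hF2 : ∀ x, site f2 x ∈ AL)
include hL ht hrp hF1 hF2

theorem twoPoint_reflect_self_nonneg {x : Torus d L} (hx : x ∈ posHalf d L i t) :
    0 ≤ twoPoint phi f1 f2 x (reflect i t x) := by
  rw [← map_halfObservable_mul_reflectFun hL ht hx hx]
  exact (hrp _ _ (halfObservable_mem hF1 hF2 x) (halfObservable_mem hF1 hF2 x)
    (halfObservable_hasDomain hx) (halfObservable_hasDomain hx)).2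

theorem twoPoint_reflect_le {x y : Torus d L} (hx : x ∈ posHalf d L i t)
    (hy : y ∈ posHalf d L i t) :
    twoPoint phi f1 f2 x (reflect i t y) ≤
      (twoPoint phi f1 f2 x (reflect i t x) + twoPoint phi f1 f2 y (reflect i t y)) / 2 := by
  simpa only [map_halfObservable_mul_reflectFun hL ht hx hy,
    map_halfObservable_mul_reflectFun hL ht hx hx, map_halfObservable_mul_reflectFun hL ht hy hy]
    using hrp.map_mul_reflectFun_le (halfObservable_mem hF1 hF2 x) (halfObservable_mem hF1 hF2 y)
      (halfObservable_hasDomain hx) (halfObservable_hasDomain hy)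

end ReflectionPositivity

section Axis

variable {d L : ℕ} {i : Fin d} {t : ℕ}

theorem axis_neg (a : ZMod L) : axis i (-a) = -axis i a := by
  ext k
  by_cases h : k = i <;> simp [axis, h]

theorem TorusSymmetric.twoPoint_zero_axis_intCast [NeZero L] {Sig : Type*}
    {phi : (MState d L Sig → ℝ) →ₗ[ℝ] ℝ} {f1 f2 : Sig → ℝ} (hsym : TorusSymmetric phi f1 f2)
    (k : ℤ) : twoPoint phi f1 f2 0 (axis i (k : ZMod L)) =
      twoPoint phi f1 f2 0 (axis i (k.natAbs : ZMod L)) := by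
  obtain ⟨n, rfl | rfl⟩ := Int.eq_nat_or_neg k
  · simp
  · rw [Int.cast_neg, axis_neg, hsym.twoPoint_zero_neg]
    simp

theorem reflect_sub_self (ht : t % 2 = 1) {x : Torus d L} {m : ℕ}
    (hx : x i = (((t + 1) / 2 + m : ℕ) : ZMod L)) :
    reflect i t x - x = axis i (-((2 * m + 1 : ℕ) : ZMod L)) := by
  ext k
  by_cases h : k = i
  · subst h
    simp only [Pi.sub_apply, reflect_apply_self, hx, axis, if_true, natCast_eq_two_mul_succ_div_two_sub_one ht]
    push_cast
    ring
  · simp [reflect_apply_of_ne x h, axis, h]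

variable [NeZero L]

theorem mem_posHalf_of_apply_eq (ht : t % 2 = 1) {x : Torus d L} {m : ℕ} (hm : m < L / 2)
    (hx : x i = (((t + 1) / 2 + m : ℕ) : ZMod L)) : x ∈ posHalf d L i t := by
  rw [mem_posHalf_iff ht, hx, Nat.cast_add, add_sub_cancel_left,
    ZMod.val_natCast_of_lt (hm.trans_le (Nat.div_le_self L 2))]
  exact hm

variable {Sig : Type*} {AL : Subalgebra ℝ (MState d L Sig → ℝ)}
  {phi : (MState d L Sig → ℝ) →ₗ[ℝ] ℝ} {f1 f2 : Sig → ℝ}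
  (hL : Even L) (ht : t % 2 = 1) (hsym : TorusSymmetric phi f1 f2)
include hL ht hsym

theorem twoPoint_reflect_self_eq {x : Torus d L} {m : ℕ} (hm : m < L / 2)
    (hx : x i = (((t + 1) / 2 + m : ℕ) : ZMod L)) :
    twoPoint phi f1 f2 x (reflect i t x) =
      twoPoint phi f1 f2 0 (axis i ((2 * m + 1 : ℕ) : ZMod L)) := by
  have hmem := mem_posHalf_of_apply_eq ht hm hx
  rw [hsym.twoPoint_eq_twoPoint_zero_sub (ne_reflect_of_mem_posHalf hL ht hmem hmem),
    reflect_sub_self ht hx, axis_neg, hsym.twoPoint_zero_neg]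

variable (hrp : IsRP AL phi i t) (hF1 : ∀ x, site f1 x ∈ AL) (hF2 : ∀ x, site f2 x ∈ AL)
include hrp hF1 hF2

theorem twoPoint_zero_axis_odd_nonneg {m : ℕ} (hm : m < L / 2) :
    0 ≤ twoPoint phi f1 f2 0 (axis i ((2 * m + 1 : ℕ) : ZMod L)) := by
  have hx : axis i (((t + 1) / 2 + m : ℕ) : ZMod L) i = (((t + 1) / 2 + m : ℕ) : ZMod L) := by
    simp [axis]
  rw [← twoPoint_reflect_self_eq hL ht hsym hm hx]
  exact twoPoint_reflect_self_nonneg hL ht hrp hF1 hF2 (mem_posHalf_of_apply_eq ht hm hx)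

/-- Reflection positivity applied to `x = (c + j) e_i` and `y = u` with its `i`-th coordinate
replaced by `c + m`, where `c = (t + 1) / 2`, so that `θ y - x = u`. -/
theorem twoPoint_zero_le_of_apply_eq {j m : ℕ} (hj : j < L / 2) (hm : m < L / 2) {u : Torus d L}
    (hu : u i = -((j + m + 1 : ℕ) : ZMod L)) :
    twoPoint phi f1 f2 0 u ≤ (twoPoint phi f1 f2 0 (axis i ((2 * j + 1 : ℕ) : ZMod L)) +
      twoPoint phi f1 f2 0 (axis i ((2 * m + 1 : ℕ) : ZMod L))) / 2 := by
  set x : Torus d L := axis i (((t + 1) / 2 + j : ℕ) : ZMod L)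
  set y : Torus d L := Function.update u i (((t + 1) / 2 + m : ℕ) : ZMod L)
  have hx : x i = (((t + 1) / 2 + j : ℕ) : ZMod L) := by simp [x, axis]
  have hy : y i = (((t + 1) / 2 + m : ℕ) : ZMod L) := by simp [y]
  have hxmem := mem_posHalf_of_apply_eq ht hj hx
  have hymem := mem_posHalf_of_apply_eq ht hm hy
  have hθyx : reflect i t y - x = u := by
    ext k
    by_cases h : k = i
    · subst h
      rw [Pi.sub_apply, reflect_apply_self, hx, hy, hu, natCast_eq_two_mul_succ_div_two_sub_one ht]
      push_cast
      ring
    · rw [Pi.sub_apply, reflect_apply_of_ne y h]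
      simp [x, y, axis, h]
  have hle := twoPoint_reflect_le hL ht hrp hF1 hF2 hxmem hymem
  rwa [twoPoint_reflect_self_eq hL ht hsym hj hx,
    twoPoint_reflect_self_eq hL ht hsym hm hy,
    hsym.twoPoint_eq_twoPoint_zero_sub (ne_reflect_of_mem_posHalf hL ht hxmem hymem), hθyx]
    at hle

end Axis

/-- The increments are nondecreasing and antisymmetric about the centre, hence nonpositive on the
first half. -/
theorem le_of_midpoint_convex_of_symm {N : ℕ} {T : ℕ → ℝ}
    (hconv : ∀ j, j + 2 < N → T (j + 1) ≤ (T j + T (j + 2)) / 2)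
    (hsymm : ∀ j < N, T (N - 1 - j) = T j) {a b : ℕ} (hab : a ≤ b) (hbN : a + b + 1 ≤ N) :
    T b ≤ T a := by
  have hincr : MonotoneOn (fun j => T (j + 1) - T j) (Set.Iic (N - 2)) := by
    refine monotoneOn_of_le_succ Set.ordConnected_Iic fun j _ _ hj => ?_
    have := hconv j (by simp only [Set.mem_Iic, Order.succ_eq_add_one] at hj; omega)
    simp only [Order.succ_eq_add_one]
    linarith
  have hdecr : AntitoneOn T (Set.Iic (N / 2)) := by
    refine antitoneOn_of_succ_le Set.ordConnected_Iic fun j _ _ hj => ?_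
    simp only [Set.mem_Iic, Order.succ_eq_add_one] at hj ⊢
    have hle := hincr (a := j) (b := N - 2 - j) (by simp only [Set.mem_Iic]; omega)
      (by simp only [Set.mem_Iic]; omega) (by omega)
    have h1 : T (N - 2 - j + 1) = T j := by
      rw [← hsymm j (by omega)]
      congr 1
      omega
    have h2 : T (N - 2 - j) = T (j + 1) := by
      rw [← hsymm (j + 1) (by omega)]
      congr 1
      omega
    simp only [h1, h2] at hle
    linarith
  rcases le_or_gt (2 * b) N with hb | hb
  · exact hdecr (by simp only [Set.mem_Iic]; omega) (by simp only [Set.mem_Iic]; omega) hab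
  · rw [← hsymm b (by omega)]
    exact hdecr (by simp only [Set.mem_Iic]; omega) (by simp only [Set.mem_Iic]; omega) (by omega)

section Average

open Finset

variable {d L : ℕ} [NeZero L]

theorem sum_torus_comp_apply (i : Fin d) (f : ZMod L → ℝ) :
    ∑ u : Torus d L, f (u i) = (L : ℝ) ^ (d - 1) * ∑ a, f a := by
  simpa [ZMod.card] using Fintype.sum_piFinset_apply f (univ : Finset (ZMod L)) i

theorem card_filter_val_not_mem_Icc_le (n : ℕ) :
    #{v : ZMod L | ¬(n ≤ v.val ∧ v.val ≤ L - n)} ≤ 2 * n := by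
  calc #{v : ZMod L | ¬(n ≤ v.val ∧ v.val ≤ L - n)}
      ≤ #(range n ∪ Ico (L - n + 1) L) := by
        refine card_le_card_of_injOn ZMod.val (fun v hv => ?_) (ZMod.val_injective L).injOn
        have := ZMod.val_lt v
        simp only [coe_filter, mem_univ, true_and, Set.mem_ofPred_eq] at hv
        simp only [coe_union, coe_range, coe_Ico, Set.mem_union, Set.mem_Iio,
          Set.mem_Ico]
        omega
    _ ≤ #(range n) + #(Ico (L - n + 1) L) := card_union_le _ _
    _ ≤ 2 * n := by simp only [card_range, Nat.card_Ico]; omega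

theorem sum_div_pow_le_of_le_of_val_mem_Icc {g : Torus d L → ℝ} (i : Fin d) {c M : ℝ} {n : ℕ}
    (hc : 0 ≤ c) (hM : 0 ≤ M) (hgM : ∀ u, g u ≤ M)
    (hgc : ∀ u, n ≤ (u i).val → (u i).val ≤ L - n → g u ≤ c) :
    (∑ u, g u) / (L : ℝ) ^ d ≤ c + 2 * n * M / L := by
  set bad : Finset (ZMod L) := {v | ¬(n ≤ v.val ∧ v.val ≤ L - n)}
  have hpoint (u : Torus d L) : g u ≤ c + if u i ∈ bad then M else 0 := by
    split_ifs with hu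
    · linarith [hgM u]
    · simp only [bad, mem_filter, mem_univ, true_and, not_not] at hu
      simpa using hgc u hu.1 hu.2
  have hd : (L : ℝ) ^ d = (L : ℝ) ^ (d - 1) * L := by
    rw [← pow_succ, Nat.sub_add_cancel (Fin.pos i)]
  have hsum : ∑ u, g u ≤ (L : ℝ) ^ (d - 1) * (L * c + 2 * n * M) := by
    calc ∑ u, g u ≤ ∑ u : Torus d L, (c + if u i ∈ bad then M else 0) :=
          sum_le_sum fun u _ => hpoint u
      _ = (L : ℝ) ^ (d - 1) * (L * c + #bad * M) := by
        rw [sum_add_distrib, sum_torus_comp_apply i (fun a => if a ∈ bad then M else 0),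
          sum_ite_mem, univ_inter, sum_const, sum_const, card_univ, Fintype.card_pi, prod_const,
          ZMod.card, card_univ, Fintype.card_fin, nsmul_eq_mul, nsmul_eq_mul, Nat.cast_pow, hd]
        ring
      _ ≤ (L : ℝ) ^ (d - 1) * (L * c + 2 * n * M) := by
        gcongr
        exact_mod_cast card_filter_val_not_mem_Icc_le n
  have hL : (0 : ℝ) < L := by exact_mod_cast NeZero.pos L
  rw [div_le_iff₀ (by positivity), hd]
  calc _ ≤ _ := hsum
    _ = _ := by field_simp

end Average

theorem _root_.ZMod.natCast_sub_eq_neg {L a : ℕ} (ha : a ≤ L) :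
    ((L - a : ℕ) : ZMod L) = -(a : ZMod L) := by
  rw [Nat.cast_sub ha, ZMod.natCast_self, zero_sub]

section Profile

variable {d L : ℕ} [NeZero L] {i : Fin d} {t : ℕ} {Sig : Type*}
  {AL : Subalgebra ℝ (MState d L Sig → ℝ)} {phi : (MState d L Sig → ℝ) →ₗ[ℝ] ℝ} {f1 f2 : Sig → ℝ}
  (hL : Even L) (ht : t % 2 = 1) (hsym : TorusSymmetric phi f1 f2) (hrp : IsRP AL phi i t)
  (hF1 : ∀ x, site f1 x ∈ AL) (hF2 : ∀ x, site f2 x ∈ AL)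
include hL ht hsym hrp hF1 hF2

/-- `j ↦ G(0, (2j+1) e_i)` is midpoint convex by reflection positivity and symmetric about
`(L/2 - 1)/2` by torus symmetry. -/
theorem twoPoint_zero_axis_odd_le_of_le {a b : ℕ} (hab : a ≤ b) (hbL : a + b + 1 ≤ L / 2) :
    twoPoint phi f1 f2 0 (axis i ((2 * b + 1 : ℕ) : ZMod L)) ≤
      twoPoint phi f1 f2 0 (axis i ((2 * a + 1 : ℕ) : ZMod L)) := by
  refine le_of_midpoint_convex_of_symm (N := L / 2)
    (T := fun j => twoPoint phi f1 f2 0 (axis i ((2 * j + 1 : ℕ) : ZMod L)))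
    (fun j hj => ?_) (fun j hj => ?_) hab hbL
  · have h := twoPoint_zero_le_of_apply_eq hL ht hsym hrp hF1 hF2 (j := j) (m := j + 2)
      (by omega) hj (u := axis i (-((j + (j + 2) + 1 : ℕ) : ZMod L))) (by simp [axis])
    rwa [axis_neg, hsym.twoPoint_zero_neg, show j + (j + 2) + 1 = 2 * (j + 1) + 1 by ring] at h
  · have hL2 := Nat.even_iff.1 hL
    rw [show 2 * (L / 2 - 1 - j) + 1 = L - (2 * j + 1) by omega,
      ZMod.natCast_sub_eq_neg (by omega), axis_neg, hsym.twoPoint_zero_neg]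

/-- Writing `u i = -(s + 1)`, split `s = j + m` with `j, m` between `(n - 1) / 2` and its mirror
image `L / 2 - 1 - (n - 1) / 2`; then both `G(0, (2j+1) e_i)` and `G(0, (2m+1) e_i)` are at
most `G(0, n e_i)`. -/
theorem twoPoint_zero_le_twoPoint_zero_axis {n : ℕ} (hn : Odd n) {u : Torus d L}
    (hnu : n ≤ (u i).val) (hun : (u i).val ≤ L - n) :
    twoPoint phi f1 f2 0 u ≤ twoPoint phi f1 f2 0 (axis i (n : ZMod L)) := by
  obtain ⟨k, rfl⟩ := hn
  have hL2 := Nat.even_iff.1 hL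
  set s := L - 1 - (u i).val
  set j := min (L / 2 - 1 - k) (s - k)
  have hu : u i = -((j + (s - j) + 1 : ℕ) : ZMod L) := by
    rw [show j + (s - j) + 1 = L - (u i).val by omega, ZMod.natCast_sub_eq_neg (ZMod.val_lt _).le,
      ZMod.natCast_val, ZMod.cast_id', id, neg_neg]
  have h := twoPoint_zero_le_of_apply_eq hL ht hsym hrp hF1 hF2 (by omega) (by omega) hu
  have hj := twoPoint_zero_axis_odd_le_of_le hL ht hsym hrp hF1 hF2 (a := k) (b := j) (by omega)
    (by omega)
  have hm := twoPoint_zero_axis_odd_le_of_le hL ht hsym hrp hF1 hF2 (a := k) (b := s - j)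
    (by omega) (by omega)
  linarith

theorem sum_twoPoint_zero_div_le {M : ℝ} (hM : 0 ≤ M) (hbd : ∀ x, twoPoint phi f1 f2 0 x ≤ M)
    {n : ℕ} (hn : Odd n) (hnL : n < L) :
    (∑ x, twoPoint phi f1 f2 0 x) / (L : ℝ) ^ d ≤
      twoPoint phi f1 f2 0 (axis i (n : ZMod L)) + 2 * n * M / L := by
  have hc : 0 ≤ twoPoint phi f1 f2 0 (axis i (n : ZMod L)) := by
    obtain ⟨m, rfl⟩ := hn
    have := Nat.even_iff.1 hL
    exact twoPoint_zero_axis_odd_nonneg hL ht hsym hrp hF1 hF2 (by omega)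
  exact sum_div_pow_le_of_le_of_val_mem_Icc i hc hM hbd
    fun u hnu hun => twoPoint_zero_le_twoPoint_zero_axis hL ht hsym hrp hF1 hF2 hn hnu hun

end Profile

theorem statement5_general (d : ℕ) (Sig : ℕ → Type*)
    (AL : ∀ L : ℕ, Subalgebra ℝ (MState d L (Sig L) → ℝ))
    (phi : ∀ L : ℕ, (MState d L (Sig L) → ℝ) →ₗ[ℝ] ℝ)
    (f1 f2 : ∀ L : ℕ, Sig L → ℝ)
    (hF1 : ∀ (L : ℕ) (x : Torus d L), site (f1 L) x ∈ AL L)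
    (hF2 : ∀ (L : ℕ) (x : Torus d L), site (f2 L) x ∈ AL L)
    (hRP : ∀ (L : ℕ) [NeZero L], Even L → RPEdges (AL L) (phi L))
    (hsym : ∀ (L : ℕ) [NeZero L], Even L → TorusSymmetric (phi L) (f1 L) (f2 L))
    (C₁ : ℝ) (M : ℝ) (hM : 0 < M)
    (hliminf : ∀ δ : ℝ, 0 < δ → ∃ L₀ : ℕ, ∀ (L : ℕ) [NeZero L], Even L → L₀ ≤ L →
      C₁ - δ ≤ (∑ x : Torus d L, twoPoint (phi L) (f1 L) (f2 L) 0 x) / (L : ℝ) ^ d)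
    (hbd : ∀ (L : ℕ) [NeZero L], Even L → ∀ x y : Torus d L, twoPoint (phi L) (f1 L) (f2 L) x y ≤ M) :
    ∀ φ : ℝ, 0 < φ → φ < C₁ / 2 →
      ∃ ε : ℝ, 0 < ε ∧ ∃ L₀ : ℕ, ∀ (L : ℕ) [NeZero L], Even L → L₀ ≤ L →
        ∀ (i : Fin d) (k : ℤ), Odd k → 0 < |k| → (|k| : ℝ) < ε * L →
          φ ≤ twoPoint (phi L) (f1 L) (f2 L) 0 (axis i (k : ZMod L)) := by
  intro φ hφ hφC
  have hgap : 0 < C₁ - φ := by linarith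
  obtain ⟨L₀, hL₀⟩ := hliminf ((C₁ - φ) / 2) (by positivity)
  -- `εM ≤ (C₁ - φ) / 4` bounds the slab error `2nM/L` by `(C₁ - φ) / 2`; `ε ≤ 1` gives `n < L`.
  refine ⟨min ((C₁ - φ) / (4 * M)) 1, by positivity, L₀, fun L _ hL hLL₀ i k hk _ hkε => ?_⟩
  have hLpos : (0 : ℝ) < L := by exact_mod_cast NeZero.pos L
  have hkabs : (k.natAbs : ℝ) = |(k : ℝ)| := by rw [Nat.cast_natAbs, Int.cast_abs]
  have hkL : (k.natAbs : ℝ) < L := by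
    linarith [mul_le_mul_of_nonneg_right (min_le_right ((C₁ - φ) / (4 * M)) 1) hLpos.le]
  have hkM : 2 * k.natAbs * M / L ≤ (C₁ - φ) / 2 := by
    have hkn : (k.natAbs : ℝ) ≤ (C₁ - φ) / (4 * M) * L := by
      linarith [mul_le_mul_of_nonneg_right (min_le_left ((C₁ - φ) / (4 * M)) 1) hLpos.le]
    rw [div_le_iff₀ hLpos]
    calc 2 * k.natAbs * M ≤ 2 * ((C₁ - φ) / (4 * M) * L) * M := by gcongr
      _ = (C₁ - φ) / 2 * L := by field_simp; ring
  have hrp : IsRP (AL L) (phi L) i 1 := hRP L hL i 1 (by have := NeZero.pos L; omega) rfl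
  have havg := sum_twoPoint_zero_div_le hL rfl (hsym L hL) hrp (hF1 L) (hF2 L) hM.le
    (hbd L hL 0) (Int.natAbs_odd.2 hk) (by exact_mod_cast hkL)
  rw [(hsym L hL).twoPoint_zero_axis_intCast]
  linarith [hL₀ L hL hLL₀]

/-- If the Cesàro sums of the two-point functions are uniformly bounded below by `C₁ > 0` and the
two-point functions are uniformly bounded above, then for any `φ ∈ (0, C₁/2)` the two-point
function is at least `φ` at all odd points `n e i` with `0 < |n| < εL`, for some `ε > 0` and all
large even `L`. -/
theorem statement5 (d : ℕ) (hd : 2 ≤ d) (Sig : ℕ → Type*)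
    (AL : ∀ L : ℕ, Subalgebra ℝ (MState d L (Sig L) → ℝ))
    (hfin : ∀ L : ℕ, FiniteDimensional ℝ (AL L))
    (phi : ∀ L : ℕ, (MState d L (Sig L) → ℝ) →ₗ[ℝ] ℝ)
    (hone : ∀ L : ℕ, phi L 1 = 1)
    (f1 f2 : ∀ L : ℕ, Sig L → ℝ)
    (hF1 : ∀ (L : ℕ) (x : Torus d L), site (f1 L) x ∈ AL L)
    (hF2 : ∀ (L : ℕ) (x : Torus d L), site (f2 L) x ∈ AL L)
    (hRP : ∀ (L : ℕ) [NeZero L], Even L → RPEdges (AL L) (phi L))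
    (hsym : ∀ (L : ℕ) [NeZero L], Even L → TorusSymmetric (phi L) (f1 L) (f2 L))
    (C₁ : ℝ) (hC₁ : 0 < C₁) (M : ℝ) (hM : 0 < M)
    (hliminf : ∀ δ : ℝ, 0 < δ → ∃ L₀ : ℕ, ∀ (L : ℕ) [NeZero L], Even L → L₀ ≤ L →
      C₁ - δ ≤ (∑ x : Torus d L, twoPoint (phi L) (f1 L) (f2 L) 0 x) / (L : ℝ) ^ d)
    (hbd : ∀ (L : ℕ) [NeZero L], Even L → ∀ x y : Torus d L, twoPoint (phi L) (f1 L) (f2 L) x y ≤ M) :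
    ∀ φ : ℝ, 0 < φ → φ < C₁ / 2 →
      ∃ ε : ℝ, 0 < ε ∧ ∃ L₀ : ℕ, ∀ (L : ℕ) [NeZero L], Even L → L₀ ≤ L →
        ∀ (i : Fin d) (k : ℤ), Odd k → 0 < |k| → (|k| : ℝ) < ε * L →
          φ ≤ twoPoint (phi L) (f1 L) (f2 L) 0 (axis i (k : ZMod L)) :=
  statement5_general d Sig AL phi f1 f2 hF1 hF2 hRP hsym C₁ M hM hliminf hbd

end RPPaper
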